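/- arXiv:math/0406348 — 7 statements merged into one kernel-verified Lean document; each statement's English description precedes it below -/
import Mathlib

section
/- Let L1 and L2 be complete atomistic lattices and f : L1 → L2 a map sending atoms to atoms or 0, with F the restriction of f to atoms. Then f preserves arbitrary joins if and only if: (1) f(a) = ⋁ F(Σ[a]) for all a ∈ L1, where Σ[a] is the set of atoms below a, and (2) for every b ∈ L2, the set F⁻¹(Σ[b] ∪ {0}) equals Σ[c] for some c ∈ L1. -/
open Set

def PreservesJoins {α β : Type*} [CompleteLattice α] [CompleteLattice β] (f : α → β) : Prop :=
  ∀ s : Set α, f (sSup s) = sSup (f '' s)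

def rAdj {α β : Type*} [CompleteLattice α] [CompleteLattice β] (f : α → β) : β → α :=
  fun b => sSup {a | f a ≤ b}

def atomsBelow {α : Type*} [CompleteLattice α] (a : α) : Set α := {p | IsAtom p ∧ p ≤ a}

def coatomsAbove {α : Type*} [CompleteLattice α] (a : α) : Set α := {x | IsCoatom x ∧ a ≤ x}

/-- A morphism of `Cal⁰_Sym`: preserves arbitrary joins, sends atoms to atoms or `⊥`,
and its right adjoint sends coatoms to coatoms or `⊤`. -/
def IsMor {α β : Type*} [CompleteLattice α] [CompleteLattice β] (f : α → β) : Prop :=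
  PreservesJoins f ∧ (∀ p : α, IsAtom p → IsAtom (f p) ∨ f p = ⊥) ∧
    (∀ x : β, IsCoatom x → IsCoatom (rAdj f x) ∨ rAdj f x = ⊤)

/-- Axiom A₀ : for any two coatoms `x`, `y`, the atoms below `x` together with the
atoms below `y` do not exhaust all atoms. -/
def AxiomA0 (α : Type*) [CompleteLattice α] : Prop :=
  ∀ x y : α, IsCoatom x → IsCoatom y →
    atomsBelow x ∪ atomsBelow y ≠ {p : α | IsAtom p}

/-- The dual of axiom A₀ (A₀ in `Lᵒᵖ`). -/
def AxiomA0Dual (α : Type*) [CompleteLattice α] : Prop :=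
  ∀ p q : α, IsAtom p → IsAtom q →
    coatomsAbove p ∪ coatomsAbove q ≠ {x : α | IsCoatom x}

/-- Conditions for a complete lattice to be an object of `Cal⁰_Sym`. -/
def CalCond (α : Type*) [CompleteLattice α] : Prop :=
  IsAtomistic α ∧ IsCoatomistic α ∧ AxiomA0 α ∧ AxiomA0Dual α

/-- For complete atomistic lattices and `f` sending atoms to atoms or `0` (with `F` its
restriction to atoms), `f` preserves arbitrary joins iff `f a = ⋁ F(Σ[a])` for all `a`
and every `F⁻¹(Σ[b] ∪ {0})` is of the form `Σ[c]`. -/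
theorem preservesJoins_iff_atomic_conditions {α β : Type*} [CompleteLattice α]
    [CompleteLattice β] [IsAtomistic α] [IsAtomistic β] (f : α → β)
    (hF : ∀ p : α, IsAtom p → IsAtom (f p) ∨ f p = ⊥) :
    PreservesJoins f ↔
      ((∀ a : α, f a = sSup (f '' atomsBelow a)) ∧
        ∀ b : β, ∃ c : α,
          {p : α | IsAtom p ∧ (f p ∈ atomsBelow b ∨ f p = ⊥)} = atomsBelow c) := by
  have hsup : ∀ a : α, sSup (atomsBelow a) = a := fun a => sSup_atoms_le_eq a
  constructor
  · intro hf
    have hmono : Monotone f := by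
      intro a b hab
      have h1 : f b = sSup (f '' {a, b}) := by
        rw [← hf]; congr 1; simp [sSup_pair, sup_eq_right.2 hab]
      rw [h1]
      exact le_sSup ⟨a, by simp⟩
    constructor
    · intro a
      conv_lhs => rw [← hsup a]
      exact hf _
    · intro b
      refine ⟨sSup {p : α | IsAtom p ∧ (f p ∈ atomsBelow b ∨ f p = ⊥)}, ?_⟩
      set S := {p : α | IsAtom p ∧ (f p ∈ atomsBelow b ∨ f p = ⊥)} with hS
      have hfc : f (sSup S) ≤ b := by
        rw [hf]
        apply sSup_le
        rintro x ⟨p, ⟨hp, hpb⟩, rfl⟩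
        rcases hpb with ⟨_, h⟩ | h
        · exact h
        · simp [h]
      ext p
      constructor
      · rintro ⟨hp, hpb⟩
        exact ⟨hp, le_sSup ⟨hp, hpb⟩⟩
      · rintro ⟨hp, hpc⟩
        refine ⟨hp, ?_⟩
        have : f p ≤ b := le_trans (hmono hpc) hfc
        rcases hF p hp with h | h
        · exact Or.inl ⟨h, this⟩
        · exact Or.inr h
  · rintro ⟨h1, h2⟩ s
    apply le_antisymm
    · set b := sSup (f '' s) with hb
      obtain ⟨c, hc⟩ := h2 b
      -- every element of s is ≤ c
      have hsc : ∀ a ∈ s, a ≤ c := by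
        intro a ha
        rw [← hsup a, ← hsup c]
        apply sSup_le_sSup
        rintro p ⟨hp, hpa⟩
        rw [← hc]
        refine ⟨hp, ?_⟩
        have hfp : f p ≤ b := by
          have h3 : f p ≤ f a := by
            rw [h1 p, h1 a]
            apply sSup_le_sSup
            exact Set.image_mono (fun q ⟨hq, hqp⟩ => ⟨hq, hqp.trans hpa⟩)
          exact h3.trans (le_sSup ⟨a, ha, rfl⟩)
        rcases hF p hp with h | h
        · exact Or.inl ⟨h, hfp⟩
        · exact Or.inr h
      have hssc : sSup s ≤ c := sSup_le hsc
      rw [h1 (sSup s)]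
      apply sSup_le
      rintro x ⟨p, ⟨hp, hps⟩, rfl⟩
      have : p ∈ atomsBelow c := ⟨hp, hps.trans hssc⟩
      rw [← hc] at this
      rcases this.2 with ⟨_, h⟩ | h
      · exact h
      · simp [h]
    · apply sSup_le
      rintro x ⟨a, ha, rfl⟩
      rw [h1 a, h1 (sSup s)]
      apply sSup_le_sSup
      exact Set.image_mono (fun q ⟨hq, hqa⟩ => ⟨hq, hqa.trans (le_sSup ha)⟩)
end

section
/- Let L1, L2 be objects of Cal⁰_Sym and let Σ'_∧ := {x₁□x₂ : x₁ a coatom of L1, x₂ a coatom of L2}, where x₁□x₂ := (Σ[x₁]×Σ₂) ∪ (Σ₁×Σ[x₂]). Then every element of Σ'_∧ belongs to Σ'_⊛ (i.e. is an admissible subset in the definition of L1⊛L2), and every element of Σ'_∧ is a coatom of the lattice L1⊛L2. -/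
open Set

def atomPairs (α β : Type*) [CompleteLattice α] [CompleteLattice β] : Set (α × β) :=
  {p | IsAtom p.1 ∧ IsAtom p.2}

def sec1 {α β : Type*} (R : Set (α × β)) (p₂ : β) : Set α := {q₁ | (q₁, p₂) ∈ R}

def sec2 {α β : Type*} (R : Set (α × β)) (p₁ : α) : Set β := {q₂ | (p₁, q₂) ∈ R}

/-- A section belongs to `Cl(Σ' ∪ {1})`: it is the set of atoms below a coatom,
or the set of all atoms. -/
def goodSec {α : Type*} [CompleteLattice α] (S : Set α) : Prop :=
  (∃ x : α, IsCoatom x ∧ S = atomsBelow x) ∨ S = {p : α | IsAtom p}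

/-- The set `Σ'_⊛` of the definition of `L1 ⊛ L2`. -/
def starCoatoms (α β : Type*) [CompleteLattice α] [CompleteLattice β] :
    Set (Set (α × β)) :=
  {R | R ⊂ atomPairs α β ∧ (∀ p₂ : β, IsAtom p₂ → goodSec (sec1 R p₂)) ∧
      (∀ p₁ : α, IsAtom p₁ → goodSec (sec2 R p₁))}

/-- The tensor product `L1 ⊛ L2`, as a closure system on `Σ₁ × Σ₂`
(`⋂₀ ∅` is normalized to the ground set `Σ₁ × Σ₂`). -/
def tensorCS (α β : Type*) [CompleteLattice α] [CompleteLattice β] :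
    Set (Set (α × β)) :=
  {S | ∃ ω ⊆ starCoatoms α β, S = atomPairs α β ∩ ⋂₀ ω}

/-- `a₁ □ a₂ = (Σ[a₁] × Σ₂) ∪ (Σ₁ × Σ[a₂])`. -/
def box {α β : Type*} [CompleteLattice α] [CompleteLattice β] (a₁ : α) (a₂ : β) :
    Set (α × β) :=
  {p ∈ atomPairs α β | p.1 ≤ a₁ ∨ p.2 ≤ a₂}

/-- `a₁ ∘ a₂ = Σ[a₁] × Σ[a₂]`. -/
def circ {α β : Type*} [CompleteLattice α] [CompleteLattice β] (a₁ : α) (a₂ : β) :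
    Set (α × β) :=
  {p ∈ atomPairs α β | p.1 ≤ a₁ ∧ p.2 ≤ a₂}

/-- Closure of a subset in a closure system. -/
def clF {X : Type*} (C : Set (Set X)) (T : Set X) : Set X := ⋂₀ {S ∈ C | T ⊆ S}

/-- Atoms of a closure system ordered by inclusion. -/
def IsAtomF {X : Type*} (C : Set (Set X)) (R : Set X) : Prop :=
  R ∈ C ∧ R ≠ ∅ ∧ ∀ S ∈ C, S ⊂ R → S = ∅

/-- Coatoms of a closure system with ground set `G`, ordered by inclusion. -/
def IsCoatomF {X : Type*} (C : Set (Set X)) (G : Set X) (R : Set X) : Prop :=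
  R ∈ C ∧ R ≠ G ∧ ∀ S ∈ C, R ⊂ S → S = G


lemma myAux_le_of_atomsBelow_subset {α : Type*} [CompleteLattice α] (ha : IsAtomistic α)
    {x y : α} (h : atomsBelow x ⊆ atomsBelow y) : x ≤ y := by
  haveI := ha
  calc x = sSup {a : α | IsAtom a ∧ a ≤ x} := (sSup_atoms_le_eq x).symm
    _ ≤ y := sSup_le fun a haa => (h haa).2

lemma myAux_coatom_eq {α : Type*} [CompleteLattice α] {x y : α} (hx : IsCoatom x)
    (hy : IsCoatom y) (hxy : x ≤ y) : x = y := by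
  rcases hxy.lt_or_eq with h | h
  · exact absurd (hx.2 _ h) hy.1
  · exact h

lemma myAux_exists_atom_not_le {α : Type*} [CompleteLattice α] (ha : IsAtomistic α)
    {x : α} (hx : IsCoatom x) : ∃ p : α, IsAtom p ∧ ¬ p ≤ x := by
  haveI := ha
  by_contra h
  push_neg at h
  exact hx.1 (top_le_iff.mp (by rw [← sSup_atoms_eq_top]; exact sSup_le fun a haa => h a haa))

lemma myAux_allAtoms_of_goodSec {α : Type*} [CompleteLattice α] (ha : IsAtomistic α)
    {x : α} (hx : IsCoatom x) {S : Set α} (hS : goodSec S) (hsub : atomsBelow x ⊆ S)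
    {p : α} (hp : IsAtom p) (hpS : p ∈ S) (hpx : ¬ p ≤ x) : S = {q : α | IsAtom q} := by
  rcases hS with ⟨y, hy, rfl⟩ | h
  · exfalso
    have hxy : x = y := myAux_coatom_eq hx hy (myAux_le_of_atomsBelow_subset ha hsub)
    exact hpx (hxy ▸ hpS.2)
  · exact h

/-- For `L1, L2` in `Cal⁰_Sym` and coatoms `x₁`, `x₂`, the set `x₁ □ x₂` belongs to
`Σ'_⊛` and is a coatom of `L1 ⊛ L2`. -/
theorem box_mem_starCoatoms_and_isCoatom {α β : Type*} [CompleteLattice α]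
    [CompleteLattice β] (hα : CalCond α) (hβ : CalCond β) :
    ∀ (x₁ : α) (x₂ : β), IsCoatom x₁ → IsCoatom x₂ →
      box x₁ x₂ ∈ starCoatoms α β ∧
      IsCoatomF (tensorCS α β) (atomPairs α β) (box x₁ x₂) := by
  intro x₁ x₂ hx₁ hx₂
  obtain ⟨ha1, -, -, -⟩ := hα
  obtain ⟨ha2, -, -, -⟩ := hβ
  obtain ⟨p₁, hp₁, hp₁x⟩ := myAux_exists_atom_not_le ha1 hx₁
  obtain ⟨p₂, hp₂, hp₂x⟩ := myAux_exists_atom_not_le ha2 hx₂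
  have hbox_sub : box x₁ x₂ ⊆ atomPairs α β := fun q hq => hq.1
  have hpmem : (p₁, p₂) ∈ atomPairs α β := ⟨hp₁, hp₂⟩
  have hpnot : (p₁, p₂) ∉ box x₁ x₂ := by
    rintro ⟨-, h | h⟩
    · exact hp₁x h
    · exact hp₂x h
  have hssub : box x₁ x₂ ⊂ atomPairs α β :=
    ⟨hbox_sub, fun h => hpnot (h hpmem)⟩
  have hsec1 : ∀ q₂ : β, IsAtom q₂ → goodSec (sec1 (box x₁ x₂) q₂) := by
    intro q₂ hq₂
    by_cases h : q₂ ≤ x₂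
    · right
      ext q₁
      simp only [sec1, box, atomPairs, Set.mem_setOf_eq]
      exact ⟨fun hh => hh.1.1, fun hh => ⟨⟨hh, hq₂⟩, Or.inr h⟩⟩
    · left
      refine ⟨x₁, hx₁, ?_⟩
      ext q₁
      simp only [sec1, box, atomPairs, atomsBelow, Set.mem_setOf_eq]
      constructor
      · rintro ⟨⟨ha, -⟩, hc | hc⟩
        · exact ⟨ha, hc⟩
        · exact absurd hc h
      · rintro ⟨ha, hc⟩
        exact ⟨⟨ha, hq₂⟩, Or.inl hc⟩
  have hsec2 : ∀ q₁ : α, IsAtom q₁ → goodSec (sec2 (box x₁ x₂) q₁) := by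
    intro q₁ hq₁
    by_cases h : q₁ ≤ x₁
    · right
      ext q₂
      simp only [sec2, box, atomPairs, Set.mem_setOf_eq]
      exact ⟨fun hh => hh.1.2, fun hh => ⟨⟨hq₁, hh⟩, Or.inl h⟩⟩
    · left
      refine ⟨x₂, hx₂, ?_⟩
      ext q₂
      simp only [sec2, box, atomPairs, atomsBelow, Set.mem_setOf_eq]
      constructor
      · rintro ⟨⟨-, ha⟩, hc | hc⟩
        · exact absurd hc h
        · exact ⟨ha, hc⟩
      · rintro ⟨ha, hc⟩
        exact ⟨⟨hq₁, ha⟩, Or.inr hc⟩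
  have hmem : box x₁ x₂ ∈ starCoatoms α β := ⟨hssub, hsec1, hsec2⟩
  refine ⟨hmem, ?_, ?_, ?_⟩
  · -- box ∈ tensorCS
    refine ⟨{box x₁ x₂}, by simpa using hmem, ?_⟩
    rw [Set.sInter_singleton]
    exact (Set.inter_eq_self_of_subset_right hbox_sub).symm
  · exact hssub.ne
  · -- maximality
    intro S hS hSsub
    -- key claim: no R ∈ starCoatoms strictly contains box
    have key : ∀ R ∈ starCoatoms α β, ¬ box x₁ x₂ ⊂ R := by
      rintro R ⟨hRsub, hR1, hR2⟩ ⟨hRle, hRne⟩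
      obtain ⟨⟨r₁, r₂⟩, hrR, hrB⟩ := Set.not_subset.mp hRne
      obtain ⟨hr₁, hr₂⟩ : IsAtom r₁ ∧ IsAtom r₂ := hRsub.1 hrR
      have hr₁x : ¬ r₁ ≤ x₁ := fun h => hrB ⟨⟨hr₁, hr₂⟩, Or.inl h⟩
      have hr₂x : ¬ r₂ ≤ x₂ := fun h => hrB ⟨⟨hr₁, hr₂⟩, Or.inr h⟩
      -- sec1 R r₂ contains all atoms of x₁ (from box) plus r₁
      have hs1 : sec1 R r₂ = {q : α | IsAtom q} := by
        refine myAux_allAtoms_of_goodSec ha1 hx₁ (hR1 r₂ hr₂) ?_ hr₁ hrR hr₁x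
        intro q hq
        exact hRle ⟨⟨hq.1, hr₂⟩, Or.inl hq.2⟩
      -- for every atom q₁, (q₁, r₂) ∈ R, hence sec2 R q₁ contains r₂ and atoms of x₂
      have hall : ∀ q₁ : α, IsAtom q₁ → ∀ q₂ : β, IsAtom q₂ → (q₁, q₂) ∈ R := by
        intro q₁ hq₁ q₂ hq₂
        have hq₁r₂ : (q₁, r₂) ∈ R := by
          have : q₁ ∈ sec1 R r₂ := hs1 ▸ hq₁
          exact this
        have hs2 : sec2 R q₁ = {q : β | IsAtom q} := by
          refine myAux_allAtoms_of_goodSec ha2 hx₂ (hR2 q₁ hq₁) ?_ hr₂ hq₁r₂ hr₂x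
          intro q hq
          exact hRle ⟨⟨hq₁, hq.1⟩, Or.inr hq.2⟩
        have : q₂ ∈ sec2 R q₁ := hs2 ▸ hq₂
        exact this
      exact hRsub.2 fun q hq => hall q.1 hq.1 q.2 hq.2
    obtain ⟨ω, hω, rfl⟩ := hS
    rcases Set.eq_empty_or_nonempty ω with rfl | ⟨R, hR⟩
    · simp
    · exfalso
      have hSR : atomPairs α β ∩ ⋂₀ ω ⊆ R :=
        fun q hq => hq.2 R hR
      exact key R (hω hR) (hSsub.trans_subset hSR)
end

section
/- Let L1, L2 be objects of Cal⁰_Sym. Then the set of coatoms of the complete lattice L1⊛L2 is exactly Σ'_⊛; equivalently, if x, y ∈ Σ'_⊛ ∪ {Σ₁×Σ₂} and x ⊊ y then y = Σ₁×Σ₂. -/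
open Set

section Aux

variable {α β : Type*} [CompleteLattice α] [CompleteLattice β]

lemma atomsBelow_subset_atoms (x : α) : atomsBelow x ⊆ {p : α | IsAtom p} :=
  fun _ hp => hp.1

lemma coatom_eq_of_atomsBelow_subset (hA : IsAtomistic α) {x y : α}
    (hx : IsCoatom x) (hy : IsCoatom y) (h : atomsBelow x ⊆ atomsBelow y) : x = y := by
  haveI := hA
  have hxy : x ≤ y := by
    have h1 : sSup (atomsBelow x) = x := sSup_atoms_le_eq x
    have h2 : sSup (atomsBelow y) = y := sSup_atoms_le_eq y
    rw [← h1, ← h2]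
    exact sSup_le_sSup h
  rcases eq_or_lt_of_le hxy with h | h
  · exact h
  · exact absurd (hx.2 y h) hy.1

/-- If a good section contains `atomsBelow x` for a coatom `x` as well as an atom
not below `x`, it is the full set of atoms. -/
lemma goodSec_full (hA : IsAtomistic α) {S : Set α} (hS : goodSec S) {x : α}
    (hx : IsCoatom x) (hsub : atomsBelow x ⊆ S) {a : α} (ha : IsAtom a)
    (hax : ¬ a ≤ x) (haS : a ∈ S) : S = {p : α | IsAtom p} := by
  rcases hS with ⟨y, hy, rfl⟩ | h
  · exact absurd (coatom_eq_of_atomsBelow_subset hA hx hy hsub ▸ haS.2) hax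
  · exact h

/-- A good section which misses some atom is `atomsBelow` of a coatom. -/
lemma goodSec_coatom {S : Set α} (hS : goodSec S) {a : α} (ha : IsAtom a)
    (haS : a ∉ S) : ∃ x : α, IsCoatom x ∧ S = atomsBelow x ∧ ¬ a ≤ x := by
  rcases hS with ⟨y, hy, rfl⟩ | h
  · exact ⟨y, hy, rfl, fun hle => haS ⟨ha, hle⟩⟩
  · exact absurd (h ▸ ha : a ∈ S) haS

lemma sec1_mono {R S : Set (α × β)} (h : R ⊆ S) (b : β) : sec1 R b ⊆ sec1 S b :=
  fun _ hq => h hq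

lemma sec2_mono {R S : Set (α × β)} (h : R ⊆ S) (a : α) : sec2 R a ⊆ sec2 S a :=
  fun _ hq => h hq

/-- Key lemma: if `(a,b) ∈ S \ R` then both sections of `S` through `(a,b)` are full. -/
lemma key_full (hAα : IsAtomistic α) (hAβ : IsAtomistic β) {R S : Set (α × β)}
    (hR : R ∈ starCoatoms α β) (hS : S ∈ starCoatoms α β) (hRS : R ⊆ S)
    {a : α} {b : β} (hab : (a, b) ∈ S) (hnab : (a, b) ∉ R) :
    sec1 S b = {p : α | IsAtom p} ∧ sec2 S a = {p : β | IsAtom p} := by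
  have hpair : (a, b) ∈ atomPairs α β := hS.1.1 hab
  obtain ⟨ha, hb⟩ := hpair
  have h1R : a ∉ sec1 R b := hnab
  have h2R : b ∉ sec2 R a := hnab
  obtain ⟨x₁, hx₁, hx₁eq, hax₁⟩ := goodSec_coatom (hR.2.1 b hb) ha h1R
  obtain ⟨x₂, hx₂, hx₂eq, hbx₂⟩ := goodSec_coatom (hR.2.2 a ha) hb h2R
  constructor
  · exact goodSec_full hAα (hS.2.1 b hb) hx₁ (hx₁eq ▸ sec1_mono hRS b) ha hax₁ hab
  · exact goodSec_full hAβ (hS.2.2 a ha) hx₂ (hx₂eq ▸ sec2_mono hRS a) hb hbx₂ hab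

/-- No two members of `Σ'_⊛` are strictly comparable. -/
lemma no_ssubset (hα : CalCond α) (hβ : CalCond β) {R S : Set (α × β)}
    (hR : R ∈ starCoatoms α β) (hS : S ∈ starCoatoms α β) (hRS : R ⊂ S) : False := by
  obtain ⟨p, hpS, hpR⟩ := Set.exists_of_ssubset hRS
  obtain ⟨a, b⟩ := p
  obtain ⟨hab, _⟩ := key_full hα.1 hβ.1 hR hS hRS.1 hpS hpR
  have hpairab : (a, b) ∈ atomPairs α β := hS.1.1 hpS
  obtain ⟨ha, hb⟩ := hpairab
  -- a witness outside S
  obtain ⟨r, hrA, hrS⟩ := Set.exists_of_ssubset hS.1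
  obtain ⟨r₁, r₂⟩ := r
  obtain ⟨hr₁, hr₂⟩ := hrA
  have hr1sec : r₁ ∉ sec1 S r₂ := hrS
  obtain ⟨z₁, hz₁, hz₁eq, hrz₁⟩ := goodSec_coatom (hS.2.1 r₂ hr₂) hr₁ hr1sec
  obtain ⟨x₁, hx₁, hx₁eq, hax₁⟩ := goodSec_coatom (hR.2.1 b hb) ha (fun h => hpR h)
  -- A₀ gives an atom below neither x₁ nor z₁
  have hsub : atomsBelow x₁ ∪ atomsBelow z₁ ⊆ {p : α | IsAtom p} := by
    rintro q (hq | hq) <;> exact hq.1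
  have hne := hα.2.2.1 x₁ z₁ hx₁ hz₁
  obtain ⟨q₁, hq₁, hq₁n⟩ := Set.exists_of_ssubset (hsub.ssubset_of_ne hne)
  have hq₁x₁ : q₁ ∉ atomsBelow x₁ := fun h => hq₁n (Or.inl h)
  have hq₁z₁ : q₁ ∉ atomsBelow z₁ := fun h => hq₁n (Or.inr h)
  -- (q₁, b) ∈ S \ R
  have hq₁bS : (q₁, b) ∈ S := by
    have : q₁ ∈ sec1 S b := hab ▸ hq₁
    exact this
  have hq₁bR : (q₁, b) ∉ R := by
    intro h
    exact hq₁x₁ (hx₁eq ▸ (h : q₁ ∈ sec1 R b))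
  obtain ⟨_, hrow⟩ := key_full hα.1 hβ.1 hR hS hRS.1 hq₁bS hq₁bR
  have : (q₁, r₂) ∈ S := by
    have : r₂ ∈ sec2 S q₁ := hrow ▸ hr₂
    exact this
  exact hq₁z₁ (hz₁eq ▸ (this : q₁ ∈ sec1 S r₂))

end Aux

/-- The coatoms of `L1 ⊛ L2` are exactly the members of `Σ'_⊛`; equivalently, if
`x, y ∈ Σ'_⊛ ∪ {Σ₁×Σ₂}` and `x ⊊ y` then `y = Σ₁×Σ₂`. -/
theorem tensorCS_coatoms_eq_starCoatoms {α β : Type*} [CompleteLattice α]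
    [CompleteLattice β] (hα : CalCond α) (hβ : CalCond β) :
    (∀ x ∈ insert (atomPairs α β) (starCoatoms α β),
      ∀ y ∈ insert (atomPairs α β) (starCoatoms α β),
        x ⊂ y → y = atomPairs α β) ∧
    {R : Set (α × β) | IsCoatomF (tensorCS α β) (atomPairs α β) R} =
      starCoatoms α β := by
  have part1 : ∀ x ∈ insert (atomPairs α β) (starCoatoms α β),
      ∀ y ∈ insert (atomPairs α β) (starCoatoms α β),
        x ⊂ y → y = atomPairs α β := by
    rintro x hx y hy hxy
    rcases hy with rfl | hy
    · rfl
    · exfalso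
      rcases hx with rfl | hx
      · exact (hxy.trans_subset hy.1.1).false
      · exact no_ssubset hα hβ hx hy hxy
  refine ⟨part1, ?_⟩
  ext R
  constructor
  · rintro ⟨⟨ω, hω, rfl⟩, hne, hmax⟩
    rcases Set.eq_empty_or_nonempty ω with rfl | ⟨T, hT⟩
    · simp at hne
    · have hRT : atomPairs α β ∩ ⋂₀ ω ⊆ T := fun p hp => hp.2 T hT
      rcases eq_or_ne (atomPairs α β ∩ ⋂₀ ω) T with h | h
      · exact h ▸ hω hT
      · have hTC : T ∈ tensorCS α β := ⟨{T}, by simpa using hω hT, by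
          simp [Set.inter_eq_right.mpr (hω hT).1.1]⟩
        have := hmax T hTC ⟨hRT, fun h' => h (subset_antisymm hRT h')⟩
        exact absurd (this ▸ (hω hT).1) (lt_irrefl _)
  · intro hR
    refine ⟨⟨{R}, by simpa using hR, by simp [Set.inter_eq_right.mpr hR.1.1]⟩,
      hR.1.ne, ?_⟩
    rintro S ⟨ω, hω, rfl⟩ hRS
    by_contra hne
    rcases Set.eq_empty_or_nonempty ω with rfl | ⟨T, hT⟩
    · simp at hne
    · have hST : atomPairs α β ∩ ⋂₀ ω ⊆ T := fun p hp => hp.2 T hT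
      exact no_ssubset hα hβ hR (hω hT) (hRS.trans_subset hST)
end

section
/- Let L1, L2 be objects of Cal⁰_Sym. There is a bijection ξ from Σ'_⊛ ∪ {Σ₁×Σ₂} to the set of morphisms Cal⁰_Sym(L1, L2ᵒᵖ) such that for every x in the domain, x = ⋃{ {p} × Σ[ξ(x)(p)] : p ∈ Σ₁ } (where Σ[ξ(x)(p)] is computed in L2, i.e. the atoms of L2 below the coatom ξ(x)(p), with Σ[1] = Σ₂). -/
open Set

section AuxProof

open OrderDual

variable {α β : Type*} [CompleteLattice α] [CompleteLattice β]

lemma sSup_atomsBelow' (h : IsAtomistic α) (a : α) : sSup (atomsBelow a) = a := by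
  letI := h
  show sSup {p : α | IsAtom p ∧ p ≤ a} = a
  exact sSup_atoms_le_eq a

lemma atomsBelow_top' : atomsBelow (⊤ : α) = {p : α | IsAtom p} := by
  ext p; simp [atomsBelow]

lemma sSup_atomsSet (h : IsAtomistic α) : sSup {p : α | IsAtom p} = (⊤ : α) := by
  rw [← atomsBelow_top']; exact sSup_atomsBelow' h ⊤

lemma goodSec.mem_iff' (hA : IsAtomistic α) {S : Set α} (h : goodSec S) {q : α}
    (hq : IsAtom q) : q ∈ S ↔ q ≤ sSup S := by
  rcases h with ⟨c, _, rfl⟩ | rfl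
  · rw [sSup_atomsBelow' hA]
    exact ⟨fun h => h.2, fun h => ⟨hq, h⟩⟩
  · rw [sSup_atomsSet hA]
    exact ⟨fun _ => le_top, fun _ => hq⟩

/-- The useful part of membership in `insert (atomPairs α β) (starCoatoms α β)`. -/
def GoodRel (x : Set (α × β)) : Prop :=
  x ⊆ atomPairs α β ∧ (∀ q : β, IsAtom q → goodSec (sec1 x q)) ∧
    (∀ p : α, IsAtom p → goodSec (sec2 x p))

lemma goodRel_of_mem {x : Set (α × β)}
    (hx : x ∈ insert (atomPairs α β) (starCoatoms α β)) : GoodRel x := by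
  rcases Set.mem_insert_iff.mp hx with rfl | hx
  · refine ⟨subset_rfl, fun q hq => Or.inr ?_, fun p hp => Or.inr ?_⟩
    · ext p; simp [sec1, atomPairs, hq]
    · ext q; simp [sec2, atomPairs, hp]
  · exact ⟨hx.1.subset, hx.2.1, hx.2.2⟩

def gmap (x : Set (α × β)) (p : α) : β := sSup (sec2 x p)

def fmapAux (x : Set (α × β)) (a : α) : β := sInf (gmap x '' atomsBelow a)

def fmap (x : Set (α × β)) : α → βᵒᵈ := fun a => toDual (fmapAux x a)

lemma mem_iff_le_gmap (hB : IsAtomistic β) {x : Set (α × β)} (hx : GoodRel x)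
    {p : α} {q : β} (hp : IsAtom p) (hq : IsAtom q) : (p, q) ∈ x ↔ q ≤ gmap x p :=
  (hx.2.2 p hp).mem_iff' hB hq

lemma atomsBelow_atom {p : α} (hp : IsAtom p) : atomsBelow p = {p} := by
  ext q
  constructor
  · rintro ⟨hq, hle⟩
    rcases hp.le_iff.mp hle with h | h
    · exact absurd h hq.1
    · exact h
  · rintro rfl; exact ⟨hp, le_rfl⟩

lemma fmapAux_atom (x : Set (α × β)) {p : α} (hp : IsAtom p) :
    fmapAux x p = gmap x p := by
  rw [fmapAux, atomsBelow_atom hp, Set.image_singleton, sInf_singleton]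

lemma le_fmapAux_iff (hB : IsAtomistic β) {x : Set (α × β)} (hx : GoodRel x)
    {q : β} (hq : IsAtom q) (a : α) :
    q ≤ fmapAux x a ↔ atomsBelow a ⊆ sec1 x q := by
  constructor
  · intro h p hpa
    have h2 : q ≤ gmap x p := h.trans (sInf_le (Set.mem_image_of_mem _ hpa))
    exact (mem_iff_le_gmap hB hx hpa.1 hq).mpr h2
  · intro h
    refine le_sInf ?_
    rintro b ⟨p, hpa, rfl⟩
    exact (mem_iff_le_gmap hB hx hpa.1 hq).mp (h hpa)

lemma atomsBelow_subset_iff_le (hA : IsAtomistic α) {a d : α} :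
    atomsBelow a ⊆ atomsBelow d ↔ a ≤ d := by
  constructor
  · intro h
    calc a = sSup (atomsBelow a) := (sSup_atomsBelow' hA a).symm
      _ ≤ sSup (atomsBelow d) := sSup_le_sSup h
      _ = d := sSup_atomsBelow' hA d
  · exact fun h p hp => ⟨hp.1, hp.2.trans h⟩

lemma preservesJoins_fmap (hA : IsAtomistic α) (hB : IsAtomistic β)
    {x : Set (α × β)} (hx : GoodRel x) : PreservesJoins (fmap x) := by
  intro s
  have himage : fmap x '' s = ofDual ⁻¹' (fmapAux x '' s) := by
    ext b
    constructor
    · rintro ⟨a, ha, rfl⟩; exact ⟨a, ha, rfl⟩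
    · rintro ⟨a, ha, hab⟩; exact ⟨a, ha, hab⟩
  rw [himage, ← toDual_sInf]
  refine congrArg toDual ?_
  apply le_antisymm
  · refine le_sInf ?_
    rintro b ⟨a, has, rfl⟩
    exact sInf_le_sInf (Set.image_mono fun p hp => ⟨hp.1, hp.2.trans (le_sSup has)⟩)
  · conv_lhs => rw [← sSup_atomsBelow' hB (sInf (fmapAux x '' s))]
    apply sSup_le
    rintro q ⟨hq, hqle⟩
    rw [le_fmapAux_iff hB hx hq]
    have hall : ∀ a ∈ s, atomsBelow a ⊆ sec1 x q := fun a ha =>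
      (le_fmapAux_iff hB hx hq a).mp (hqle.trans (sInf_le ⟨a, ha, rfl⟩))
    rcases hx.2.1 q hq with ⟨d, _, hsec⟩ | hsec
    · rw [hsec] at hall ⊢
      rw [atomsBelow_subset_iff_le hA]
      exact sSup_le fun a ha => (atomsBelow_subset_iff_le hA).mp (hall a ha)
    · rw [hsec]; exact fun p hp => hp.1

lemma fmap_atom_cond (hB : IsAtomistic β) {x : Set (α × β)} (hx : GoodRel x) :
    ∀ p : α, IsAtom p → IsAtom (fmap x p) ∨ fmap x p = ⊥ := by
  intro p hp
  have h1 : fmap x p = toDual (gmap x p) := congrArg toDual (fmapAux_atom x hp)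
  rcases hx.2.2 p hp with ⟨c, hc, hsec⟩ | hsec
  · left
    have h2 : gmap x p = c := by rw [gmap, hsec, sSup_atomsBelow' hB]
    rw [h1, h2]
    exact hc
  · right
    have h2 : gmap x p = ⊤ := by rw [gmap, hsec, sSup_atomsSet hB]
    rw [h1, h2]
    rfl

lemma fmap_radj_cond (hA : IsAtomistic α) (hB : IsAtomistic β)
    {x : Set (α × β)} (hx : GoodRel x) :
    ∀ y : βᵒᵈ, IsCoatom y → IsCoatom (rAdj (fmap x) y) ∨ rAdj (fmap x) y = ⊤ := by
  intro y hy
  have hq : IsAtom (ofDual y) := hy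
  have hset : {a : α | fmap x a ≤ y} = {a : α | atomsBelow a ⊆ sec1 x (ofDual y)} := by
    ext a
    exact le_fmapAux_iff hB hx hq a
  rcases hx.2.1 (ofDual y) hq with ⟨d, hd, hsec⟩ | hsec
  · left
    have h2 : rAdj (fmap x) y = d := by
      rw [rAdj, hset, hsec]
      apply le_antisymm
      · exact sSup_le fun a ha => (atomsBelow_subset_iff_le hA).mp ha
      · exact le_sSup fun p hp => hp
    rw [h2]
    exact hd
  · right
    rw [rAdj, hset, hsec]
    have h2 : {a : α | atomsBelow a ⊆ {p : α | IsAtom p}} = Set.univ :=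
      Set.eq_univ_of_forall fun a p hp => hp.1
    rw [h2, sSup_univ]

lemma eq_setOf_fmap (hB : IsAtomistic β) {x : Set (α × β)} (hx : GoodRel x) :
    x = {p : α × β | p ∈ atomPairs α β ∧ p.2 ≤ ofDual (fmap x p.1)} := by
  ext ⟨p, q⟩
  constructor
  · intro h
    have hpq := hx.1 h
    refine ⟨hpq, ?_⟩
    have h2 : ofDual (fmap x p) = gmap x p := fmapAux_atom x hpq.1
    rw [h2]
    exact (mem_iff_le_gmap hB hx hpq.1 hpq.2).mp h
  · rintro ⟨hpq, hle⟩
    have h2 : ofDual (fmap x p) = gmap x p := fmapAux_atom x hpq.1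
    rw [h2] at hle
    exact (mem_iff_le_gmap hB hx hpq.1 hpq.2).mpr hle

lemma gc_of_preservesJoins {γ δ : Type*} [CompleteLattice γ] [CompleteLattice δ]
    {f : γ → δ} (hf : PreservesJoins f) (a : γ) (b : δ) : f a ≤ b ↔ a ≤ rAdj f b := by
  have hmono : Monotone f := by
    intro a a' h
    have h1 : sSup ({a, a'} : Set γ) = a' := by rw [sSup_pair, sup_eq_right.mpr h]
    have h2 := hf {a, a'}
    rw [h1] at h2
    rw [h2]
    exact le_sSup ⟨a, by simp, rfl⟩
  constructor
  · intro h
    exact le_sSup h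
  · intro h
    refine (hmono h).trans ?_
    rw [rAdj, hf]
    apply sSup_le
    rintro d ⟨a', ha', rfl⟩
    exact ha'

/-- The inverse construction: the relation associated to a morphism. -/
def relOf (f : α → βᵒᵈ) : Set (α × β) :=
  {p : α × β | p ∈ atomPairs α β ∧ p.2 ≤ ofDual (f p.1)}

lemma sec2_relOf {f : α → βᵒᵈ} {p : α} (hp : IsAtom p) :
    sec2 (relOf f) p = atomsBelow (ofDual (f p)) := by
  ext q
  constructor
  · rintro ⟨⟨_, hq⟩, hle⟩
    exact ⟨hq, hle⟩
  · rintro ⟨hq, hle⟩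
    exact ⟨⟨hp, hq⟩, hle⟩

lemma sec1_relOf {f : α → βᵒᵈ} (hf : PreservesJoins f) {q : β} (hq : IsAtom q) :
    sec1 (relOf f) q = atomsBelow (rAdj f (toDual q)) := by
  ext p
  constructor
  · rintro ⟨⟨hp, _⟩, hle⟩
    exact ⟨hp, (gc_of_preservesJoins hf p (toDual q)).mp hle⟩
  · rintro ⟨hp, hle⟩
    exact ⟨⟨hp, hq⟩, (gc_of_preservesJoins hf p (toDual q)).mpr hle⟩

lemma relOf_mem {f : α → βᵒᵈ} (hf : IsMor f) :
    relOf f ∈ insert (atomPairs α β) (starCoatoms α β) := by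
  by_cases hfull : relOf f = atomPairs α β
  · rw [hfull]; exact Set.mem_insert _ _
  · refine Set.mem_insert_of_mem _ ⟨⟨fun p hp => hp.1, fun h => hfull (le_antisymm (fun p hp => hp.1) h)⟩, ?_, ?_⟩
    · intro q hq
      rw [sec1_relOf hf.1 hq]
      rcases hf.2.2 (toDual q) hq with hd | hd
      · exact Or.inl ⟨_, hd, rfl⟩
      · rw [hd, atomsBelow_top']
        exact Or.inr rfl
    · intro p hp
      rw [sec2_relOf hp]
      rcases hf.2.1 p hp with hd | hd
      · exact Or.inl ⟨_, hd, rfl⟩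
      · right
        have : ofDual (f p) = ⊤ := congrArg ofDual hd
        rw [this, atomsBelow_top']

lemma fmap_relOf (hA : IsAtomistic α) (hB : IsAtomistic β) {f : α → βᵒᵈ}
    (hf : IsMor f) : fmap (relOf f) = f := by
  funext a
  have hg : ∀ p : α, IsAtom p → gmap (relOf f) p = ofDual (f p) := by
    intro p hp
    rw [gmap, sec2_relOf hp, sSup_atomsBelow' hB]
  have h1 : f a = sSup (f '' atomsBelow a) := by
    conv_lhs => rw [← sSup_atomsBelow' hA a, hf.1]
  have himg : gmap (relOf f) '' atomsBelow a = toDual ⁻¹' (f '' atomsBelow a) := by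
    ext b
    constructor
    · rintro ⟨p, hp, rfl⟩
      refine ⟨p, hp, ?_⟩
      show f p = toDual (gmap (relOf f) p)
      rw [hg p hp.1]
      rfl
    · rintro ⟨p, hp, hfp⟩
      refine ⟨p, hp, ?_⟩
      rw [hg p hp.1, hfp]
      rfl
  show toDual (sInf (gmap (relOf f) '' atomsBelow a)) = f a
  rw [himg, h1, ← ofDual_sSup]
  rfl

end AuxProof

/-- There is a bijection `ξ` between `Σ'_⊛ ∪ {Σ₁×Σ₂}` and `Cal⁰_Sym(L1, L2ᵒᵖ)` such
that `x = ⋃ {{p} × Σ[ξ(x)(p)] | p ∈ Σ₁}`. -/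
theorem starCoatoms_equiv_morphisms {α β : Type*} [CompleteLattice α]
    [CompleteLattice β] (hα : CalCond α) (hβ : CalCond β) :
    ∃ ξ : {x : Set (α × β) // x ∈ insert (atomPairs α β) (starCoatoms α β)} →
        {f : α → βᵒᵈ // IsMor f},
      Function.Bijective ξ ∧
      ∀ x : {x : Set (α × β) // x ∈ insert (atomPairs α β) (starCoatoms α β)},
        x.val =
        {p : α × β | p ∈ atomPairs α β ∧
          p.2 ≤ OrderDual.ofDual ((ξ x : α → βᵒᵈ) p.1)} := by
  obtain ⟨hA1, _, _, _⟩ := hα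
  obtain ⟨hB1, _, _, _⟩ := hβ
  refine ⟨fun x => ⟨fmap x.val,
      preservesJoins_fmap hA1 hB1 (goodRel_of_mem x.2),
      fmap_atom_cond hB1 (goodRel_of_mem x.2),
      fmap_radj_cond hA1 hB1 (goodRel_of_mem x.2)⟩, ⟨?_, ?_⟩, ?_⟩
  · intro x y h
    have h' : fmap x.val = fmap y.val := congrArg Subtype.val h
    apply Subtype.ext
    rw [eq_setOf_fmap hB1 (goodRel_of_mem x.2), eq_setOf_fmap hB1 (goodRel_of_mem y.2), h']
  · rintro ⟨f, hf⟩
    exact ⟨⟨relOf f, relOf_mem hf⟩, Subtype.ext (fmap_relOf hA1 hB1 hf)⟩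
  · intro x
    exact eq_setOf_fmap hB1 (goodRel_of_mem x.2)
end

section
/- The functor F : Cal⁰_Sym → Chu(Set₀, 2₀) defined on objects by F(L) = (Σ∪{0}, r, Σ'∪{1}) with r(p,x) = 0 ⟺ p ≤ x, and on morphisms by F(f) = (f, f°), is full and faithful. In particular, if F(L1) ≅ F(L2) then L1 ≅ L2. -/
open Set

universe u

/-- An object of `Chu(Set₀, 2₀)`: two pointed sets and a pointed pairing into `2₀`
(`r a x` means `r(a,x) = 1`; pointedness of `r` says `r(0,·) ≡ 0 ≡ r(·,0)`). -/
structure ChuObj : Type (u + 1) where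
  A : Type u
  a0 : A
  X : Type u
  x0 : X
  r : A → X → Prop
  ha : ∀ x, ¬ r a0 x
  hx : ∀ a, ¬ r a x0

/-- A morphism of `Chu(Set₀, 2₀)`. -/
structure ChuHom (M N : ChuObj) where
  f : M.A → N.A
  g : N.X → M.X
  hf : f M.a0 = N.a0
  hg : g N.x0 = M.x0
  compat : ∀ a y, N.r (f a) y ↔ M.r a (g y)

/-- An isomorphism of `Chu(Set₀, 2₀)`. -/
structure ChuIso (M N : ChuObj) where
  eA : M.A ≃ N.A
  eX : M.X ≃ N.X
  ha : eA M.a0 = N.a0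
  hx : eX M.x0 = N.x0
  hr : ∀ a x, N.r (eA a) (eX x) ↔ M.r a x

/-- The functor `F` on objects : `F(L) = (Σ ∪ {0}, r, Σ' ∪ {1})`, with
`r(p,x) = 0 ⟺ p ≤ x`. -/
def FObj (α : Type u) [CompleteLattice α] : ChuObj where
  A := Option {p : α // IsAtom p}
  a0 := none
  X := Option {x : α // IsCoatom x}
  x0 := none
  r := fun a x => match a, x with
    | some p, some y => ¬ (p.val ≤ y.val)
    | _, _ => False
  ha := by intro x h; cases x <;> exact h
  hx := by intro a h; cases a <;> exact h

open Classical in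
/-- The atom component of `F(f)`. -/
noncomputable def atomMap {α β : Type u} [CompleteLattice α] [CompleteLattice β]
    (f : α → β) : (FObj α).A → (FObj β).A :=
  fun a => match a with
    | none => none
    | some p => if h : IsAtom (f p.val) then some ⟨f p.val, h⟩ else none

open Classical in
/-- The coatom component of `F(f)`, given by the right adjoint `f°`. -/
noncomputable def coatomMap {α β : Type u} [CompleteLattice α] [CompleteLattice β]
    (f : α → β) : (FObj β).X → (FObj α).X :=
  fun x => match x with
    | none => none
    | some y => if h : IsCoatom (rAdj f y.val) then some ⟨rAdj f y.val, h⟩ else none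

section Aux

variable {α β : Type u} [CompleteLattice α] [CompleteLattice β]

lemma le_iff_coatom (hc : IsCoatomistic α) {a b : α} :
    a ≤ b ↔ ∀ x : α, IsCoatom x → b ≤ x → a ≤ x := by
  constructor
  · exact fun h x _ hb => h.trans hb
  · intro h
    obtain ⟨s, rfl, hs⟩ := CompleteLattice.isCoatomistic_iff.1 hc b
    exact le_sInf fun x hx => h x (hs x hx) (sInf_le hx)

lemma eq_of_coatoms (hc : IsCoatomistic α) {a b : α}
    (h : ∀ x : α, IsCoatom x → (a ≤ x ↔ b ≤ x)) : a = b :=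
  le_antisymm ((le_iff_coatom hc).2 fun x hx hb => (h x hx).2 hb)
    ((le_iff_coatom hc).2 fun x hx ha => (h x hx).1 ha)

/-- Value of an element of `Σ ∪ {0}`, with `0 ↦ ⊥`. -/
def av : Option {p : β // IsAtom p} → β
  | none => ⊥
  | some q => q.val

/-- Value of an element of `Σ' ∪ {1}`, with `1 ↦ ⊤`. -/
def xv : Option {x : α // IsCoatom x} → α
  | none => ⊤
  | some x => x.val

/-- The map `α → β` induced by a Chu morphism, as the join of images of atoms. -/
noncomputable def chuF (m : ChuHom (FObj α) (FObj β)) : α → β :=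
  fun a => sSup ((fun p => av (m.f (some p))) '' {p : {p : α // IsAtom p} | p.val ≤ a})

/-- The key compatibility: `φ p ≤ y ↔ p ≤ ψ y` for atoms `p`, coatoms `y`. -/
lemma star (m : ChuHom (FObj α) (FObj β)) (p : {p : α // IsAtom p})
    (y : {y : β // IsCoatom y}) :
    av (m.f (some p)) ≤ y.val ↔ p.val ≤ xv (m.g (some y)) := by
  have h := m.compat (some p) (some y)
  cases hf : m.f (some p) with
  | none =>
    rw [hf] at h
    cases hg : m.g (some y) with
    | none => simp [av, xv]
    | some x =>
      rw [hg] at h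
      replace h : False ↔ ¬ (p.val ≤ x.val) := h
      have hpx : p.val ≤ x.val := by by_contra hc; exact h.mpr hc
      simp [av, xv, hpx]
  | some q =>
    rw [hf] at h
    cases hg : m.g (some y) with
    | none =>
      rw [hg] at h
      replace h : ¬ (q.val ≤ y.val) ↔ False := h
      have hqy : q.val ≤ y.val := by by_contra hc; exact h.mp hc
      simp [av, xv, hqy]
    | some x =>
      rw [hg] at h
      replace h : ¬ (q.val ≤ y.val) ↔ ¬ (p.val ≤ x.val) := h
      simpa [av, xv] using not_iff_not.mp h

lemma chuF_le_coatom (m : ChuHom (FObj α) (FObj β)) (hA : IsAtomistic α) (a : α)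
    (y : {y : β // IsCoatom y}) :
    chuF m a ≤ y.val ↔ a ≤ xv (m.g (some y)) := by
  haveI := hA
  constructor
  · intro h
    refine le_iff_atom_le_imp.2 fun c hc hca => ?_
    have hm := Set.mem_image_of_mem (fun p : {p : α // IsAtom p} => av (m.f (some p)))
      (show (⟨c, hc⟩ : {p : α // IsAtom p}) ∈ {p : {p : α // IsAtom p} | p.val ≤ a} from hca)
    exact (star m ⟨c, hc⟩ y).1 (le_trans (le_sSup hm) h)
  · intro h
    apply sSup_le
    rintro b ⟨q, hq, rfl⟩
    exact (star m q y).2 (le_trans hq h)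

lemma chuF_joins (m : ChuHom (FObj α) (FObj β)) (hA : IsAtomistic α)
    (hB : IsCoatomistic β) : PreservesJoins (chuF m) := by
  intro s
  apply eq_of_coatoms hB
  intro x hx
  rw [chuF_le_coatom m hA _ ⟨x, hx⟩, sSup_le_iff, sSup_le_iff]
  constructor
  · rintro h b ⟨a, ha, rfl⟩
    exact (chuF_le_coatom m hA a ⟨x, hx⟩).2 (h a ha)
  · intro h a ha
    exact (chuF_le_coatom m hA a ⟨x, hx⟩).1 (h _ ⟨a, ha, rfl⟩)

lemma chuF_radj (m : ChuHom (FObj α) (FObj β)) (hA : IsAtomistic α)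
    (y : {y : β // IsCoatom y}) :
    rAdj (chuF m) y.val = xv (m.g (some y)) := by
  apply le_antisymm
  · exact sSup_le fun a ha => (chuF_le_coatom m hA a y).1 ha
  · exact le_sSup ((chuF_le_coatom m hA _ y).2 le_rfl)

lemma chuF_atom (m : ChuHom (FObj α) (FObj β)) (p : {p : α // IsAtom p}) :
    chuF m p.val = av (m.f (some p)) := by
  apply le_antisymm
  · apply sSup_le
    rintro b ⟨q, hq, rfl⟩
    have hqp : q = p := by
      rcases lt_or_eq_of_le (hq : q.val ≤ p.val) with h | h
      · exact absurd (p.2.2 _ h) q.2.1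
      · exact Subtype.ext h
    rw [hqp]
  · exact le_sSup ⟨p, le_rfl, rfl⟩

lemma chuF_mono (m : ChuHom (FObj α) (FObj β)) : Monotone (chuF m) :=
  fun _ _ hab => sSup_le_sSup (Set.image_mono fun _ hp => le_trans hp hab)

lemma atomMap_chuF (m : ChuHom (FObj α) (FObj β)) : m.f = atomMap (chuF m) := by
  funext a
  cases a with
  | none => exact m.hf
  | some p =>
    simp only [atomMap]
    cases hf : m.f (some p) with
    | none =>
      have hb : chuF m p.val = ⊥ := by rw [chuF_atom m p, hf]; rfl
      symm; exact dif_neg (show ¬ IsAtom (chuF m p.val) from fun h => (hb ▸ h).1 rfl)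
    | some q =>
      refine Eq.trans ?_ (dif_pos (show IsAtom (chuF m p.val) by rw [chuF_atom m p, hf]; exact q.2)).symm
      exact congrArg some (Subtype.ext
        (show q.val = chuF m p.val by rw [chuF_atom m p, hf]; rfl))

lemma coatomMap_chuF (m : ChuHom (FObj α) (FObj β)) (hA : IsAtomistic α) :
    m.g = coatomMap (chuF m) := by
  funext y
  cases y with
  | none => exact m.hg
  | some y =>
    simp only [coatomMap]
    cases hg : m.g (some y) with
    | none =>
      have hb : rAdj (chuF m) y.val = ⊤ := by rw [chuF_radj m hA y, hg]; rfl
      symm; exact dif_neg (show ¬ IsCoatom (rAdj (chuF m) y.val) from fun h => (hb ▸ h).1 rfl)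
    | some x =>
      refine Eq.trans ?_ (dif_pos (show IsCoatom (rAdj (chuF m) y.val) by rw [chuF_radj m hA y, hg]; exact x.2)).symm
      exact congrArg some (Subtype.ext
        (show x.val = rAdj (chuF m) y.val by rw [chuF_radj m hA y, hg]; rfl))

lemma isMor_chuF (m : ChuHom (FObj α) (FObj β)) (hA : IsAtomistic α)
    (hB : IsCoatomistic β) : IsMor (chuF m) := by
  refine ⟨chuF_joins m hA hB, fun p hp => ?_, fun x hx => ?_⟩
  · rw [chuF_atom m ⟨p, hp⟩]
    cases h : m.f (some ⟨p, hp⟩) with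
    | none => exact Or.inr rfl
    | some q => exact Or.inl q.2
  · rw [chuF_radj m hA ⟨x, hx⟩]
    cases h : m.g (some ⟨x, hx⟩) with
    | none => exact Or.inr rfl
    | some y => exact Or.inl y.2

lemma chuF_left_inv (m : ChuHom (FObj α) (FObj β)) (m' : ChuHom (FObj β) (FObj α))
    (hA : IsAtomistic α) (hA' : IsCoatomistic α) (hB : IsAtomistic β)
    (h3 : m.g ∘ m'.g = id) : ∀ a : α, chuF m' (chuF m a) = a := by
  intro a
  apply eq_of_coatoms hA'
  intro x hx
  rw [chuF_le_coatom m' hB _ ⟨x, hx⟩]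
  obtain ⟨y, hy⟩ : ∃ y, m'.g (some ⟨x, hx⟩) = some y := by
    cases h : m'.g (some ⟨x, hx⟩) with
    | none =>
      exfalso
      have h0 : m.g (m'.g (some ⟨x, hx⟩)) = some ⟨x, hx⟩ := congrFun h3 (some ⟨x, hx⟩)
      rw [h] at h0
      exact Option.some_ne_none _ (h0.symm.trans (show m.g none = none from m.hg))
    | some y => exact ⟨y, rfl⟩
  rw [hy]
  show chuF m a ≤ y.val ↔ a ≤ x
  rw [chuF_le_coatom m hA a y]
  have hxy : m.g (some y) = some ⟨x, hx⟩ := by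
    rw [← hy]; exact congrFun h3 (some ⟨x, hx⟩)
  rw [hxy]
  exact Iff.rfl

end Aux

/-- The functor `F : Cal⁰_Sym → Chu(Set₀,2₀)` is full and faithful; in particular
`F(L1) ≅ F(L2)` implies `L1 ≅ L2`. -/
theorem F_full_faithful {α β : Type u} [CompleteLattice α] [CompleteLattice β]
    (hα : CalCond α) (hβ : CalCond β) :
    (∀ f g : α → β, IsMor f → IsMor g →
      atomMap f = atomMap g → coatomMap f = coatomMap g → f = g) ∧
    (∀ m : ChuHom (FObj α) (FObj β),
      ∃ f : α → β, IsMor f ∧ m.f = atomMap f ∧ m.g = coatomMap f) ∧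
    ((∃ (m : ChuHom (FObj α) (FObj β)) (m' : ChuHom (FObj β) (FObj α)),
        m'.f ∘ m.f = id ∧ m.f ∘ m'.f = id ∧ m.g ∘ m'.g = id ∧ m'.g ∘ m.g = id) →
      Nonempty (α ≃o β)) := by
  obtain ⟨hAa, hAc, -, -⟩ := hα
  obtain ⟨hBa, hBc, -, -⟩ := hβ
  haveI := hAa
  refine ⟨?_, ?_, ?_⟩
  · -- faithfulness
    intro f g hf hg haf _
    have key : ∀ p : α, IsAtom p → f p = g p := by
      intro p hp
      have h := congrFun haf (some ⟨p, hp⟩)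
      simp only [atomMap] at h
      classical
      change (if h : IsAtom (f p) then (some ⟨f p, h⟩ : Option {q : β // IsAtom q}) else none) = (if h : IsAtom (g p) then (some ⟨g p, h⟩ : Option {q : β // IsAtom q}) else none) at h
      by_cases h1 : IsAtom (f p) <;> by_cases h2 : IsAtom (g p)
      · rw [dif_pos h1, dif_pos h2] at h
        exact congrArg Subtype.val (Option.some.inj h)
      · rw [dif_pos h1, dif_neg h2] at h; exact absurd h (Option.some_ne_none _)
      · rw [dif_neg h1, dif_pos h2] at h; exact absurd h.symm (Option.some_ne_none _)
      · rw [(hf.2.1 p hp).resolve_left h1, (hg.2.1 p hp).resolve_left h2]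
    funext a
    calc f a = f (sSup {p : α | IsAtom p ∧ p ≤ a}) := by rw [sSup_atoms_le_eq]
      _ = sSup (f '' {p : α | IsAtom p ∧ p ≤ a}) := hf.1 _
      _ = sSup (g '' {p : α | IsAtom p ∧ p ≤ a}) := by
            congr 1
            exact Set.image_congr fun p hp => key p hp.1
      _ = g (sSup {p : α | IsAtom p ∧ p ≤ a}) := (hg.1 _).symm
      _ = g a := by rw [sSup_atoms_le_eq]
  · -- fullness
    intro m
    exact ⟨chuF m, isMor_chuF m hAa hBc, atomMap_chuF m, coatomMap_chuF m hAa⟩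
  · -- isomorphism
    rintro ⟨m, m', -, -, h3, h4⟩
    have linv := chuF_left_inv m m' hAa hAc hBa h3
    have rinv := chuF_left_inv m' m hBa hBc hAa h4
    refine ⟨⟨⟨chuF m, chuF m', linv, rinv⟩, ?_⟩⟩
    intro a b
    show chuF m a ≤ chuF m b ↔ a ≤ b
    exact ⟨fun h => by
        have := chuF_mono m' h
        rwa [linv, linv] at this,
      fun h => chuF_mono m h⟩
end

section
/- For every object L of Cal⁰_Sym, F(Lᵒᵖ) = F(L)^⊥, and for every morphism f, F(fᵒᵖ) = F(f)^⊥, where (A,r,X)^⊥ := (X, ř, A) with ř(x,a) = r(a,x). Moreover F(2) is isomorphic to the tensor unit ⊤ = (2₀, r, 2₀) with r injective. -/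
open Set

universe u

/-- The dual `(A,r,X)^⊥ = (X, ř, A)` of a Chu object. -/
def ChuObj.dual (M : ChuObj) : ChuObj where
  A := M.X
  a0 := M.x0
  X := M.A
  x0 := M.a0
  r := fun x a => M.r a x
  ha := fun a => M.hx a
  hx := fun x => M.ha x

/-- `fᵒᵖ : L2ᵒᵖ → L1ᵒᵖ`, `fᵒᵖ(b) = f°(b)`. -/
def fop {α β : Type u} [CompleteLattice α] [CompleteLattice β] (f : α → β) :
    βᵒᵈ → αᵒᵈ :=
  fun b => OrderDual.toDual (rAdj f (OrderDual.ofDual b))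

/-- The tensor unit `⊤ = (2₀, r, 2₀)` with `r` injective. -/
def chuTop : ChuObj where
  A := Bool
  a0 := false
  X := Bool
  x0 := false
  r := fun a x => a = true ∧ x = true
  ha := by simp
  hx := by simp


section Aux

lemma mono_of_preservesJoins {α β : Type*} [CompleteLattice α] [CompleteLattice β]
    {f : α → β} (hf : PreservesJoins f) : Monotone f := by
  intro a b hab
  have : f b = sSup (f '' {a, b}) := by
    rw [← hf]; congr 1; simpa using hab
  rw [this]
  exact le_sSup ⟨a, by simp⟩

lemma gc_of_preservesJoins_s12 {α β : Type*} [CompleteLattice α] [CompleteLattice β]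
    {f : α → β} (hf : PreservesJoins f) : GaloisConnection f (rAdj f) := by
  intro a b
  constructor
  · intro h; exact le_sSup h
  · intro h
    calc f a ≤ f (rAdj f b) := mono_of_preservesJoins hf h
    _ = sSup (f '' {a | f a ≤ b}) := by rw [← hf]; rfl
    _ ≤ b := by
        apply sSup_le
        rintro y ⟨x, hx, rfl⟩; exact hx

lemma isAtom_Prop_iff {p : Prop} : IsAtom p ↔ p := by
  constructor
  · intro h
    by_contra hp
    exact h.1 (eq_false hp)
  · intro hp
    refine ⟨fun h => ?_, fun b hb => ?_⟩
    · rw [h] at hp; exact hp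
    · exact eq_false (fun h => hb.2 (fun _ => h))

lemma isCoatom_Prop_iff {x : Prop} : IsCoatom x ↔ ¬ x := by
  constructor
  · intro h hx
    exact h.1 (eq_true hx)
  · intro hx
    refine ⟨fun h => hx (by rw [h]; trivial), fun b hb => ?_⟩
    refine eq_true ?_
    by_contra h
    exact hb.2 (fun pb => absurd pb h)

end Aux

/-- `F(Lᵒᵖ) = F(L)^⊥` on objects and `F(fᵒᵖ) = F(f)^⊥` on morphisms (the components
of `F(fᵒᵖ)` are `(f°, (fᵒᵖ)°)` and `(fᵒᵖ)° = f`); moreover `F(2) ≅ ⊤`. -/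
theorem F_dual_and_unit {α β : Type u} [CompleteLattice α] [CompleteLattice β]
    (hα : CalCond α) (hβ : CalCond β) :
    Nonempty (ChuIso (FObj αᵒᵈ) (ChuObj.dual (FObj α))) ∧
    (∀ f : α → β, IsMor f →
      (∀ b : β, fop f (OrderDual.toDual b) = OrderDual.toDual (rAdj f b)) ∧
      (∀ a : α, rAdj (fop f) (OrderDual.toDual a) = OrderDual.toDual (f a))) ∧
    Nonempty (ChuIso (FObj Prop) chuTop) := by
  refine ⟨⟨?_⟩, ?_, ⟨?_⟩⟩
  · -- F(Lᵒᵖ) ≅ F(L)ᗮ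
    refine
      { eA := Equiv.optionCongr (Equiv.subtypeEquiv (OrderDual.ofDual (α := α)) ?_)
        eX := Equiv.optionCongr (Equiv.subtypeEquiv (OrderDual.ofDual (α := α)) ?_)
        ha := rfl
        hx := rfl
        hr := ?_ }
    · intro p; exact Iff.symm isCoatom_dual_iff_isAtom
    · intro x; exact Iff.symm isAtom_dual_iff_isCoatom
    · rintro (_ | p) (_ | x) <;>
        exact Iff.rfl
  · -- morphisms
    intro f hf
    refine ⟨fun b => rfl, fun a => ?_⟩
    have gc := gc_of_preservesJoins_s12 hf.1
    show sSup {b : βᵒᵈ | fop f b ≤ OrderDual.toDual a} = OrderDual.toDual (f a)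
    have hset : {b : βᵒᵈ | fop f b ≤ OrderDual.toDual a}
        = {b : βᵒᵈ | f a ≤ OrderDual.ofDual b} := by
      ext b
      show a ≤ rAdj f (OrderDual.ofDual b) ↔ f a ≤ OrderDual.ofDual b
      exact (gc a (OrderDual.ofDual b)).symm
    rw [hset]
    apply le_antisymm
    · exact sSup_le (fun b hb => hb)
    · exact le_sSup (le_refl (f a))
  · -- F(2) ≅ ⊤
    refine
      { eA := { toFun := fun a => a.isSome
                invFun := fun b => cond b (some ⟨True, isAtom_Prop_iff.mpr trivial⟩) none
                left_inv := ?_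
                right_inv := by rintro (_|_) <;> rfl }
        eX := { toFun := fun x => x.isSome
                invFun := fun b => cond b (some ⟨False, isCoatom_Prop_iff.mpr not_false⟩) none
                left_inv := ?_
                right_inv := by rintro (_|_) <;> rfl }
        ha := rfl
        hx := rfl
        hr := ?_ }
    · rintro (_ | ⟨p, hp⟩)
      · rfl
      · exact congrArg some (Subtype.ext (eq_true (isAtom_Prop_iff.mp hp)).symm)
    · rintro (_ | ⟨x, hx⟩)
      · rfl
      · exact congrArg some (Subtype.ext (eq_false (isCoatom_Prop_iff.mp hx)).symm)
    · rintro (_ | ⟨p, hp⟩) (_ | ⟨x, hx⟩)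
      · exact ⟨fun h => absurd h.1 Bool.false_ne_true, fun h => h.elim⟩
      · exact ⟨fun h => absurd h.1 Bool.false_ne_true, fun h => h.elim⟩
      · exact ⟨fun h => absurd h.2 Bool.false_ne_true, fun h => h.elim⟩
      · have hp' := isAtom_Prop_iff.mp hp
        have hx' := isCoatom_Prop_iff.mp hx
        constructor
        · intro _ h; exact hx' (h hp')
        · intro _; exact ⟨rfl, rfl⟩
end

section
/- Let L1, L2 be objects of Cal⁰_Sym. Then L1⊛L2 lies between the separated product and the Shmuely tensor product: L1∧̇L2 ⊆ L1⊛L2 ⊆ L1∨̇L2 (as closure systems on Σ₁×Σ₂). Moreover, for all automorphisms u₁ of L1 and u₂ of L2, the map u₁⊛u₂ is an automorphism of L1⊛L2 acting on atoms by (p₁,p₂) ↦ (u₁(p₁),u₂(p₂)); hence L1⊛L2 ∈ S(L1,L2). -/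
open Set

/-- The separated product `L1 ∧̇ L2` of Aerts: the closure system generated by the
sets `a₁ □ a₂`. -/
def sepProdCS (α β : Type*) [CompleteLattice α] [CompleteLattice β] :
    Set (Set (α × β)) :=
  {S | ∃ ω ⊆ {B : Set (α × β) | ∃ (a₁ : α) (a₂ : β), B = box a₁ a₂},
    S = atomPairs α β ∩ ⋂₀ ω}

/-- The tensor product `L1 ∨̇ L2` of Shmuely: all subsets of `Σ₁ × Σ₂` whose
sections are closed. -/
def shmuelyCS (α β : Type*) [CompleteLattice α] [CompleteLattice β] :
    Set (Set (α × β)) :=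
  {R | R ⊆ atomPairs α β ∧
    (∀ p₂ : β, IsAtom p₂ → ∃ a : α, sec1 R p₂ = atomsBelow a) ∧
    (∀ p₁ : α, IsAtom p₁ → ∃ a : β, sec2 R p₁ = atomsBelow a)}


section Aux

variable {α β : Type*} [CompleteLattice α] [CompleteLattice β]

lemma exists_atom_not_le (hA : IsAtomistic α) {x : α} (hx : x ≠ ⊤) :
    ∃ p : α, IsAtom p ∧ ¬ p ≤ x := by
  haveI := hA
  by_contra h
  push_neg at h
  have htop : (⊤ : α) ≤ x := by
    rw [← sSup_atoms_eq_top]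
    exact sSup_le fun p hp => h p hp
  exact hx (le_antisymm le_top htop)

lemma le_of_forall_coatom (hC : IsCoatomistic α) {p a : α}
    (h : ∀ x : α, IsCoatom x → a ≤ x → p ≤ x) : p ≤ a := by
  haveI := hC
  obtain ⟨s, rfl, hs⟩ := eq_sInf_coatoms a
  exact le_sInf fun x hx => h x (hs x hx) (sInf_le hx)

lemma box_mem_star (hA1 : IsAtomistic α) (hA2 : IsAtomistic β) {x₁ : α} {x₂ : β}
    (h1 : IsCoatom x₁) (h2 : IsCoatom x₂) : box x₁ x₂ ∈ starCoatoms α β := by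
  obtain ⟨p₁, hp₁, hp₁x⟩ := exists_atom_not_le hA1 h1.1
  obtain ⟨p₂, hp₂, hp₂x⟩ := exists_atom_not_le hA2 h2.1
  refine ⟨⟨fun p hp => hp.1, fun hsub => ?_⟩, ?_, ?_⟩
  · have := hsub (show (p₁, p₂) ∈ atomPairs α β from ⟨hp₁, hp₂⟩)
    rcases this.2 with h | h
    · exact hp₁x h
    · exact hp₂x h
  · intro q₂ hq₂
    by_cases hle : q₂ ≤ x₂
    · right
      ext r
      exact ⟨fun hr => hr.1.1, fun hr => ⟨⟨hr, hq₂⟩, Or.inr hle⟩⟩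
    · left
      refine ⟨x₁, h1, ?_⟩
      ext r
      exact ⟨fun hr => ⟨hr.1.1, hr.2.resolve_right hle⟩, fun hr => ⟨⟨hr.1, hq₂⟩, Or.inl hr.2⟩⟩
  · intro q₁ hq₁
    by_cases hle : q₁ ≤ x₁
    · right
      ext r
      exact ⟨fun hr => hr.1.2, fun hr => ⟨⟨hq₁, hr⟩, Or.inl hle⟩⟩
    · left
      refine ⟨x₂, h2, ?_⟩
      ext r
      exact ⟨fun hr => ⟨hr.1.2, hr.2.resolve_left hle⟩, fun hr => ⟨⟨hq₁, hr.1⟩, Or.inr hr.2⟩⟩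

lemma sep_subset_tensor (hα : CalCond α) (hβ : CalCond β) :
    sepProdCS α β ⊆ tensorCS α β := by
  rintro S ⟨ω, hω, rfl⟩
  refine ⟨{R | ∃ (a₁ : α) (a₂ : β) (x₁ : α) (x₂ : β), box a₁ a₂ ∈ ω ∧
      IsCoatom x₁ ∧ a₁ ≤ x₁ ∧ IsCoatom x₂ ∧ a₂ ≤ x₂ ∧ R = box x₁ x₂}, ?_, ?_⟩
  · rintro R ⟨a₁, a₂, x₁, x₂, _, hx₁, _, hx₂, _, rfl⟩
    exact box_mem_star hα.1 hβ.1 hx₁ hx₂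
  · ext p
    constructor
    · rintro ⟨hp, hmem⟩
      refine ⟨hp, ?_⟩
      rintro R ⟨a₁, a₂, x₁, x₂, hB, hx₁, ha₁, hx₂, ha₂, rfl⟩
      have := hmem _ hB
      exact ⟨hp, this.2.imp (fun h => h.trans ha₁) (fun h => h.trans ha₂)⟩
    · rintro ⟨hp, hmem⟩
      refine ⟨hp, ?_⟩
      intro B hB
      obtain ⟨a₁, a₂, rfl⟩ := hω hB
      refine ⟨hp, ?_⟩
      by_cases hc : p.1 ≤ a₁
      · exact Or.inl hc
      · right
        have hex : ∃ x₁ : α, IsCoatom x₁ ∧ a₁ ≤ x₁ ∧ ¬ p.1 ≤ x₁ := by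
          by_contra hno
          push_neg at hno
          exact hc (le_of_forall_coatom hα.2.1 fun x hx hax => hno x hx hax)
        obtain ⟨x₁, hx₁, ha₁, hpx₁⟩ := hex
        refine le_of_forall_coatom hβ.2.1 fun x₂ hx₂ hax₂ => ?_
        have := hmem (box x₁ x₂) ⟨a₁, a₂, x₁, x₂, hB, hx₁, ha₁, hx₂, hax₂, rfl⟩
        exact this.2.resolve_left hpx₁

lemma tensor_subset_shmuely (hA : IsAtomistic α) (hB : IsAtomistic β) :
    tensorCS α β ⊆ shmuelyCS α β := by
  rintro S ⟨ω, hω, rfl⟩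
  refine ⟨inter_subset_left, ?_, ?_⟩
  · intro p₂ hp₂
    refine ⟨sSup (sec1 (atomPairs α β ∩ ⋂₀ ω) p₂), ?_⟩
    ext q
    constructor
    · intro hq
      exact ⟨hq.1.1, le_sSup hq⟩
    · rintro ⟨hq, hle⟩
      refine ⟨⟨hq, hp₂⟩, fun R hR => ?_⟩
      rcases (hω hR).2.1 p₂ hp₂ with ⟨x, hx, hsec⟩ | hsec
      · have hsub : sec1 (atomPairs α β ∩ ⋂₀ ω) p₂ ⊆ atomsBelow x := fun r hr => by
          have : r ∈ sec1 R p₂ := hr.2 R hR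
          rwa [hsec] at this
        have hsx : sSup (sec1 (atomPairs α β ∩ ⋂₀ ω) p₂) ≤ x :=
          sSup_le fun r hr => (hsub hr).2
        show q ∈ sec1 R p₂
        rw [hsec]
        exact ⟨hq, hle.trans hsx⟩
      · show q ∈ sec1 R p₂
        rw [hsec]
        exact hq
  · intro p₁ hp₁
    refine ⟨sSup (sec2 (atomPairs α β ∩ ⋂₀ ω) p₁), ?_⟩
    ext q
    constructor
    · intro hq
      exact ⟨hq.1.2, le_sSup hq⟩
    · rintro ⟨hq, hle⟩
      refine ⟨⟨hp₁, hq⟩, fun R hR => ?_⟩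
      rcases (hω hR).2.2 p₁ hp₁ with ⟨x, hx, hsec⟩ | hsec
      · have hsub : sec2 (atomPairs α β ∩ ⋂₀ ω) p₁ ⊆ atomsBelow x := fun r hr => by
          have : r ∈ sec2 R p₁ := hr.2 R hR
          rwa [hsec] at this
        have hsx : sSup (sec2 (atomPairs α β ∩ ⋂₀ ω) p₁) ≤ x :=
          sSup_le fun r hr => (hsub hr).2
        show q ∈ sec2 R p₁
        rw [hsec]
        exact ⟨hq, hle.trans hsx⟩
      · show q ∈ sec2 R p₁
        rw [hsec]
        exact hq

lemma atomsBelow_image (u : α ≃o α) (x : α) : u '' atomsBelow x = atomsBelow (u x) := by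
  ext p
  constructor
  · rintro ⟨q, ⟨hq, hqx⟩, rfl⟩
    exact ⟨(u.isAtom_iff q).mpr hq, u.monotone hqx⟩
  · rintro ⟨hp, hpx⟩
    refine ⟨u.symm p, ⟨(u.symm.isAtom_iff p).mpr hp, ?_⟩, u.apply_symm_apply p⟩
    rw [← u.le_iff_le, u.apply_symm_apply]
    exact hpx

lemma atoms_image (u : α ≃o α) : u '' {p : α | IsAtom p} = {p : α | IsAtom p} := by
  ext p
  constructor
  · rintro ⟨q, hq, rfl⟩
    exact (u.isAtom_iff q).mpr hq
  · intro hp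
    exact ⟨u.symm p, (u.symm.isAtom_iff p).mpr hp, u.apply_symm_apply p⟩

variable (u₁ : α ≃o α) (u₂ : β ≃o β)

lemma F_bij : Function.Bijective (fun p : α × β => (u₁ p.1, u₂ p.2)) :=
  (u₁.toEquiv.prodCongr u₂.toEquiv).bijective

lemma atomPairs_image :
    (fun p : α × β => (u₁ p.1, u₂ p.2)) '' atomPairs α β = atomPairs α β := by
  ext p
  constructor
  · rintro ⟨⟨q₁, q₂⟩, ⟨hq₁, hq₂⟩, rfl⟩
    exact ⟨(u₁.isAtom_iff q₁).mpr hq₁, (u₂.isAtom_iff q₂).mpr hq₂⟩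
  · rintro ⟨hp₁, hp₂⟩
    exact ⟨(u₁.symm p.1, u₂.symm p.2),
      ⟨(u₁.symm.isAtom_iff _).mpr hp₁, (u₂.symm.isAtom_iff _).mpr hp₂⟩,
      by simp⟩

lemma sec1_image (R : Set (α × β)) (q₂ : β) :
    sec1 ((fun p : α × β => (u₁ p.1, u₂ p.2)) '' R) q₂ = u₁ '' sec1 R (u₂.symm q₂) := by
  ext r
  constructor
  · rintro ⟨⟨s₁, s₂⟩, hs, hEq⟩
    have h1 : u₁ s₁ = r := congrArg Prod.fst hEq
    have h2 : u₂ s₂ = q₂ := congrArg Prod.snd hEq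
    refine ⟨s₁, ?_, h1⟩
    show (s₁, u₂.symm q₂) ∈ R
    rwa [← h2, u₂.symm_apply_apply]
  · rintro ⟨s₁, hs, rfl⟩
    exact ⟨(s₁, u₂.symm q₂), hs, by simp⟩

lemma sec2_image (R : Set (α × β)) (q₁ : α) :
    sec2 ((fun p : α × β => (u₁ p.1, u₂ p.2)) '' R) q₁ = u₂ '' sec2 R (u₁.symm q₁) := by
  ext r
  constructor
  · rintro ⟨⟨s₁, s₂⟩, hs, hEq⟩
    have h1 : u₁ s₁ = q₁ := congrArg Prod.fst hEq
    have h2 : u₂ s₂ = r := congrArg Prod.snd hEq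
    refine ⟨s₂, ?_, h2⟩
    show (u₁.symm q₁, s₂) ∈ R
    rwa [← h1, u₁.symm_apply_apply]
  · rintro ⟨s₂, hs, rfl⟩
    exact ⟨(u₁.symm q₁, s₂), hs, by simp⟩

lemma star_image {R : Set (α × β)} (hR : R ∈ starCoatoms α β) :
    (fun p : α × β => (u₁ p.1, u₂ p.2)) '' R ∈ starCoatoms α β := by
  obtain ⟨⟨hsub, hne⟩, hs1, hs2⟩ := hR
  refine ⟨⟨?_, ?_⟩, ?_, ?_⟩
  · rw [← atomPairs_image u₁ u₂]
    exact Set.image_mono hsub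
  · intro habs
    apply hne
    intro p hp
    have hFp : (fun p : α × β => (u₁ p.1, u₂ p.2)) p ∈ atomPairs α β :=
      ⟨(u₁.isAtom_iff _).mpr hp.1, (u₂.isAtom_iff _).mpr hp.2⟩
    obtain ⟨q, hq, hqe⟩ := habs hFp
    rwa [(F_bij u₁ u₂).1 hqe] at hq
  · intro q₂ hq₂
    rw [sec1_image]
    rcases hs1 (u₂.symm q₂) ((u₂.symm.isAtom_iff q₂).mpr hq₂) with ⟨x, hx, hsec⟩ | hsec
    · exact Or.inl ⟨u₁ x, (u₁.isCoatom_iff x).mpr hx, by rw [hsec, atomsBelow_image]⟩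
    · exact Or.inr (by rw [hsec, atoms_image])
  · intro q₁ hq₁
    rw [sec2_image]
    rcases hs2 (u₁.symm q₁) ((u₁.symm.isAtom_iff q₁).mpr hq₁) with ⟨x, hx, hsec⟩ | hsec
    · exact Or.inl ⟨u₂ x, (u₂.isCoatom_iff x).mpr hx, by rw [hsec, atomsBelow_image]⟩
    · exact Or.inr (by rw [hsec, atoms_image])

lemma tensor_map {S : Set (α × β)} (hS : S ∈ tensorCS α β) :
    (fun p : α × β => (u₁ p.1, u₂ p.2)) '' S ∈ tensorCS α β := by
  obtain ⟨ω, hω, rfl⟩ := hS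
  set F := fun p : α × β => (u₁ p.1, u₂ p.2) with hF
  refine ⟨(Set.image F) '' ω, ?_, ?_⟩
  · rintro R' ⟨R, hR, rfl⟩
    exact star_image u₁ u₂ (hω hR)
  · rw [Set.image_inter (F_bij u₁ u₂).1, atomPairs_image, Set.sInter_image,
      Set.sInter_eq_biInter, Set.image_iInter₂ (F_bij u₁ u₂)]

end Aux

/-- `L1 ∧̇ L2 ⊆ L1 ⊛ L2 ⊆ L1 ∨̇ L2`, and `L1 ⊛ L2` is stable under the maps induced
by pairs of automorphisms of `L1` and `L2`; hence `L1 ⊛ L2 ∈ S(L1, L2)`. -/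

theorem tensorCS_mem_S {α β : Type*} [CompleteLattice α] [CompleteLattice β]
    (hα : CalCond α) (hβ : CalCond β) :
    sepProdCS α β ⊆ tensorCS α β ∧
    tensorCS α β ⊆ shmuelyCS α β ∧
    ∀ (u₁ : α ≃o α) (u₂ : β ≃o β) (S : Set (α × β)),
      S ∈ tensorCS α β ↔
        (fun p : α × β => (u₁ p.1, u₂ p.2)) '' S ∈ tensorCS α β := by
  refine ⟨sep_subset_tensor hα hβ, tensor_subset_shmuely hα.1 hβ.1, fun u₁ u₂ S => ?_⟩
  constructor
  · exact tensor_map u₁ u₂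
  · intro h
    have h2 := tensor_map u₁.symm u₂.symm h
    have : (fun p : α × β => (u₁.symm p.1, u₂.symm p.2)) ''
        ((fun p : α × β => (u₁ p.1, u₂ p.2)) '' S) = S := by
      rw [Set.image_image]
      simp
    rwa [this] at h2
end
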